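/- arXiv:1701.06757 — 3 statements merged into one kernel-verified Lean document; each statement's English description precedes it below -/
import Mathlib

section
/- For natural numbers u, v ≥ 3, the inequality π/u + π/v > π/2 holds if and only if the determinant of the 3×3 matrix [[1, -cos(π/u), 0], [-cos(π/u), 1, -cos(π/v)], [0, -cos(π/v), 1]] is positive. -/
open Real Matrix

/-!
The determinant equals `1 - cos² a - cos² b = sin² a - cos² b` with `a = π/u`, `b = π/v` in
`(0, π/2]`, so it is positive iff `cos b = sin (π/2 - b) < sin a`, which by monotonicity of `sin`
on `[-π/2, π/2]` means `π/2 - b < a`.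
-/

theorem det_coxeter_fin_three {R : Type*} [CommRing R] (x y : R) :
    (!![1, -x, 0; -x, 1, -y; 0, -y, 1] : Matrix (Fin 3) (Fin 3) R).det = 1 - x ^ 2 - y ^ 2 := by
  rw [det_fin_three]
  simp only [of_apply, cons_val', cons_val_zero, cons_val_one, cons_val_two, empty_val',
    cons_val_fin_one, Nat.succ_eq_add_one, Nat.reduceAdd, head_cons, tail_cons, head_fin_const]
  ring

theorem Real.cos_lt_sin_iff {a b : ℝ} (ha : a ∈ Set.Icc (-(π / 2)) (π / 2))
    (hb : b ∈ Set.Icc 0 π) :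
    cos b < sin a ↔ π / 2 < a + b := by
  rw [← sin_pi_div_two_sub,
    strictMonoOn_sin.lt_iff_lt ⟨by linarith [hb.2], by linarith [hb.1]⟩ ha]
  constructor <;> intro h <;> linarith

theorem Real.pi_div_two_lt_add_iff_cos_sq_add_cos_sq_lt_one {a b : ℝ}
    (ha : a ∈ Set.Icc 0 (π / 2)) (hb : b ∈ Set.Icc 0 (π / 2)) :
    π / 2 < a + b ↔ cos a ^ 2 + cos b ^ 2 < 1 := by
  have hsin : 0 ≤ sin a := sin_nonneg_of_nonneg_of_le_pi ha.1 (by linarith [ha.2, pi_pos])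
  have hcos : 0 ≤ cos b := cos_nonneg_of_mem_Icc ⟨by linarith [hb.1, pi_pos], hb.2⟩
  rw [← cos_lt_sin_iff ⟨by linarith [ha.1, pi_pos], ha.2⟩ ⟨hb.1, by linarith [hb.2, pi_pos]⟩,
    ← pow_lt_pow_iff_left₀ hcos hsin two_ne_zero, sin_sq]
  constructor <;> intro h <;> linarith

theorem pi_div_mem_Icc_zero_pi_div_two {n : ℕ} (hn : 2 ≤ n) : π / n ∈ Set.Icc 0 (π / 2) := by
  have hn' : (2 : ℝ) ≤ n := by exact_mod_cast hn
  exact ⟨by positivity, div_le_div_of_nonneg_left pi_pos.le two_pos hn'⟩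

theorem statement0 (u v : ℕ) (hu : 3 ≤ u) (hv : 3 ≤ v) :
    π / u + π / v > π / 2 ↔
      0 < (!![1, -Real.cos (π / u), 0;
              -Real.cos (π / u), 1, -Real.cos (π / v);
              0, -Real.cos (π / v), 1] : Matrix (Fin 3) (Fin 3) ℝ).det := by
  rw [gt_iff_lt, det_coxeter_fin_three, sub_sub, sub_pos]
  exact pi_div_two_lt_add_iff_cos_sq_add_cos_sq_lt_one
    (pi_div_mem_Icc_zero_pi_div_two (by omega)) (pi_div_mem_Icc_zero_pi_div_two (by omega))
end

section
/- For any real u, v, w with π/u + π/v < π/2 and π/v + π/w < π/2 and u, v, w ≥ 3, one has sin(π/u)·sin(π/w) < cos(π/v), i.e. the full Coxeter–Schläfli determinant B = sin²(π/u)sin²(π/w) - cos²(π/v) is negative. -/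
open Real

theorem Real.sin_lt_cos_of_add_lt_pi_div_two {x y : ℝ} (hx : 0 ≤ x) (hy : 0 ≤ y)
    (h : x + y < π / 2) : sin x < cos y := by
  rw [← sin_pi_div_two_sub]
  exact sin_lt_sin_of_lt_of_le_pi_div_two (by linarith [pi_pos]) (by linarith) (by linarith)

theorem Real.abs_sin_mul_sin_lt_cos {x y : ℝ} (hx : 0 ≤ x) (hy : 0 ≤ y)
    (h : x + y < π / 2) (z : ℝ) : |sin x * sin z| < cos y :=
  calc |sin x * sin z| = |sin x| * |sin z| := abs_mul _ _
    _ ≤ |sin x| := mul_le_of_le_one_right (abs_nonneg _) (abs_sin_le_one z)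
    _ = sin x := abs_of_nonneg (sin_nonneg_of_nonneg_of_le_pi hx (by linarith [pi_pos]))
    _ < cos y := sin_lt_cos_of_add_lt_pi_div_two hx hy h

theorem statement13_general (u v w : ℝ) (hu : 3 ≤ u) (hv : 3 ≤ v)
    (h1 : π / u + π / v < π / 2) :
    Real.sin (π / u) * Real.sin (π / w) < Real.cos (π / v) ∧
    Real.sin (π / u) ^ 2 * Real.sin (π / w) ^ 2 - Real.cos (π / v) ^ 2 < 0 := by
  have hbound := abs_sin_mul_sin_lt_cos (div_nonneg pi_pos.le (by linarith))
    (div_nonneg pi_pos.le (by linarith)) h1 (π / w)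
  obtain ⟨hlower, hupper⟩ := abs_lt.mp hbound
  refine ⟨hupper, sub_neg.mpr ?_⟩
  rw [← mul_pow]
  exact sq_lt_sq' hlower hupper

theorem statement13 (u v w : ℝ) (hu : 3 ≤ u) (hv : 3 ≤ v) (hw : 3 ≤ w)
    (h1 : π / u + π / v < π / 2) (h2 : π / v + π / w < π / 2) :
    Real.sin (π / u) * Real.sin (π / w) < Real.cos (π / v) ∧
    Real.sin (π / u) ^ 2 * Real.sin (π / w) ^ 2 - Real.cos (π / v) ^ 2 < 0 :=
  statement13_general u v w hu hv h1
end

section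
/- For u, v, w ≥ 3 real with B = sin²(π/u)sin²(π/w) - cos²(π/v) ≠ 0, the matrix (1/B)·M, where M is the symmetric 4×4 matrix with entries m₀₀ = sin²(π/w) - cos²(π/v), m₀₁ = cos(π/u)sin²(π/w), m₀₂ = cos(π/u)cos(π/v), m₀₃ = cos(π/u)cos(π/v)cos(π/w), m₁₁ = sin²(π/w), m₁₂ = cos(π/v), m₁₃ = cos(π/w)cos(π/v), m₂₂ = sin²(π/u), m₂₃ = cos(π/w)sin²(π/u), m₃₃ = sin²(π/u) - cos²(π/v), is the inverse of the Coxeter–Schläfli matrix [[1, -cos(π/u), 0, 0], [-cos(π/u), 1, -cos(π/v), 0], [0, -cos(π/v), 1, -cos(π/w)], [0, 0, -cos(π/w), 1]]. -/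
open Real Matrix

/-- The Coxeter–Schläfli matrix `(b^{ij})` of the orthoscheme `W_{uvw}`. -/
noncomputable def CSMatrix (u v w : ℝ) : Matrix (Fin 4) (Fin 4) ℝ :=
  !![1, -Real.cos (π / u), 0, 0;
     -Real.cos (π / u), 1, -Real.cos (π / v), 0;
     0, -Real.cos (π / v), 1, -Real.cos (π / w);
     0, 0, -Real.cos (π / w), 1]

/-- The matrix `M` of (3.1), with `(a_{ij}) = (1/B)·M`. -/
noncomputable def CSInvNum (u v w : ℝ) : Matrix (Fin 4) (Fin 4) ℝ :=
  !![Real.sin (π / w) ^ 2 - Real.cos (π / v) ^ 2,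
       Real.cos (π / u) * Real.sin (π / w) ^ 2,
       Real.cos (π / u) * Real.cos (π / v),
       Real.cos (π / u) * Real.cos (π / v) * Real.cos (π / w);
     Real.cos (π / u) * Real.sin (π / w) ^ 2,
       Real.sin (π / w) ^ 2,
       Real.cos (π / v),
       Real.cos (π / w) * Real.cos (π / v);
     Real.cos (π / u) * Real.cos (π / v),
       Real.cos (π / v),
       Real.sin (π / u) ^ 2,
       Real.cos (π / w) * Real.sin (π / u) ^ 2;
     Real.cos (π / u) * Real.cos (π / v) * Real.cos (π / w),
       Real.cos (π / w) * Real.cos (π / v),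
       Real.cos (π / w) * Real.sin (π / u) ^ 2,
       Real.sin (π / u) ^ 2 - Real.cos (π / v) ^ 2]


/-! The Schläfli matrix is tridiagonal, so its adjugate has the closed form below; writing
`p = 1 - a²` and `q = 1 - c²` (the `sin²` of the paper) its determinant is `p q - b²`, which is
`B` of (3.1). -/

section Schlafli

variable {R : Type*} [CommRing R]

def schlafliMatrix (a b c : R) : Matrix (Fin 4) (Fin 4) R :=
  !![1, -a, 0, 0; -a, 1, -b, 0; 0, -b, 1, -c; 0, 0, -c, 1]

def schlafliAdjugate (a b c p q : R) : Matrix (Fin 4) (Fin 4) R :=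
  !![q - b ^ 2, a * q, a * b, a * b * c;
     a * q, q, b, c * b;
     a * b, b, p, c * p;
     a * b * c, c * b, c * p, p - b ^ 2]

theorem schlafliMatrix_mul_adjugate (a b c p q : R) (hp : p + a ^ 2 = 1) (hq : q + c ^ 2 = 1) :
    schlafliMatrix a b c * schlafliAdjugate a b c p q = (p * q - b ^ 2) • 1 := by
  obtain rfl : p = 1 - a ^ 2 := eq_sub_of_add_eq hp
  obtain rfl : q = 1 - c ^ 2 := eq_sub_of_add_eq hq
  ext i j
  fin_cases i <;> fin_cases j <;>
    simp [schlafliMatrix, schlafliAdjugate, mul_apply, Fin.sum_univ_four, one_apply] <;> ring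

end Schlafli

theorem statement16_general (u v w : ℝ)
    (hB : Real.sin (π / u) ^ 2 * Real.sin (π / w) ^ 2 - Real.cos (π / v) ^ 2 ≠ 0) :
    CSMatrix u v w *
        ((Real.sin (π / u) ^ 2 * Real.sin (π / w) ^ 2 - Real.cos (π / v) ^ 2)⁻¹ •
          CSInvNum u v w) = 1 ∧
    ((Real.sin (π / u) ^ 2 * Real.sin (π / w) ^ 2 - Real.cos (π / v) ^ 2)⁻¹ •
          CSInvNum u v w) * CSMatrix u v w = 1 := by
  have hM : CSMatrix u v w * CSInvNum u v w =
      (Real.sin (π / u) ^ 2 * Real.sin (π / w) ^ 2 - Real.cos (π / v) ^ 2) • 1 :=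
    schlafliMatrix_mul_adjugate _ _ _ _ _ (sin_sq_add_cos_sq _) (sin_sq_add_cos_sq _)
  have hInv : CSMatrix u v w *
      ((Real.sin (π / u) ^ 2 * Real.sin (π / w) ^ 2 - Real.cos (π / v) ^ 2)⁻¹ •
        CSInvNum u v w) = 1 := by
    rw [Matrix.mul_smul, hM, smul_smul, inv_mul_cancel₀ hB, one_smul]
  exact ⟨hInv, mul_eq_one_comm.mp hInv⟩

/-- (3.1): `(1/B)·M` is the inverse of the Coxeter–Schläfli matrix. -/
theorem statement16 (u v w : ℝ) (hu : 3 ≤ u) (hv : 3 ≤ v) (hw : 3 ≤ w)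
    (hB : Real.sin (π / u) ^ 2 * Real.sin (π / w) ^ 2 - Real.cos (π / v) ^ 2 ≠ 0) :
    CSMatrix u v w *
        ((Real.sin (π / u) ^ 2 * Real.sin (π / w) ^ 2 - Real.cos (π / v) ^ 2)⁻¹ •
          CSInvNum u v w) = 1 ∧
    ((Real.sin (π / u) ^ 2 * Real.sin (π / w) ^ 2 - Real.cos (π / v) ^ 2)⁻¹ •
          CSInvNum u v w) * CSMatrix u v w = 1 :=
  statement16_general u v w hB
end
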